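/- arXiv:1903.11477 — 3 statements merged into one kernel-verified Lean document; each statement's English description precedes it below -/
import Mathlib

section
/- Let g ≥ 1 be an integer. For each natural number n, let f_n ∈ ℚ be the coefficient of x^n in the formal power series (x−2)^{n+1−2g} · (1+x)^{n−g} · (1−x)^{−(n+g)} · (1−2x)^{g} ∈ ℚ[[x]]. Let S ∈ ℚ[[q]] be any formal power series with constant coefficient 1 satisfying S² = (1−q)·(1−9q). Then in ℚ[[q]] one has ∑_{n≥0} (−1)^n · f_n · q^n = −2^{−g} · (1−q)^{g−1} · (1 + (1−3q)·S^{−1})^{1−g}, where 1 + (1−3q)·S^{−1} has constant coefficient 2, hence is a unit, and its (1−g)-th power is taken in the group of units of ℚ[[q]]. -/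
/-!
Write `f n = [xⁿ] A·φⁿ` with `A = (x-2)^(1-2g) (1+x)^(-g) (1-x)^(-g) (1-2x)^g` and
`φ = (x-2)(1+x)/(1-x)`. By the Lagrange–Bürmann formula, `∑ [xⁿ](A·(-φ)ⁿ) qⁿ = A(u)·u'/(-φ(u))`,
where `u = -q·φ(u)` is the root `u = (1 - q - S)/(2(1 - q))` of `(1-q)·u(1-u) = 2q`. The series
`A(u)·u'/(-φ(u))` is a product of powers of `u-2, 1+u, 1-u, 1-2u`, and the quadratic relation for
`u` turns it into `-2^(-g) (1-q)^(g-1) (1 + (1-3q)/S)^(1-g)`.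
-/

open PowerSeries

namespace PowerSeries

variable {R : Type*}

theorem coeff_X_mul_derivative [CommSemiring R] (f : R⟦X⟧) (n : ℕ) :
    coeff n (X * d⁄dX R f) = n * coeff n f := by
  cases n with
  | zero => simp
  | succ n => rw [coeff_succ_X_mul, coeff_derivative, mul_comm]; push_cast; ring

variable [CommRing R] [IsAddTorsionFree R]

theorem coeff_inv_pow_succ_mul_derivative_X_mul (V : R⟦X⟧ˣ) (j : ℕ) :
    coeff j ((↑V⁻¹ : R⟦X⟧) ^ (j + 1) * d⁄dX R (X * (V : R⟦X⟧))) = if j = 0 then 1 else 0 := by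
  set W : R⟦X⟧ := ↑V⁻¹
  have hsplit : W ^ (j + 1) * d⁄dX R (X * (V : R⟦X⟧)) =
      W ^ j + X * (W ^ (j + 1) * d⁄dX R (V : R⟦X⟧)) := by
    rw [Derivation.leibniz, derivative_X, smul_eq_mul, smul_eq_mul, mul_one]
    linear_combination W ^ j * V.inv_mul
  rw [hsplit, map_add]
  cases j with
  | zero => simp
  | succ i =>
    -- `X · (W^(i+1))' = -(i+1) · X W^(i+2) V'`, and `X · d/dX` multiplies the
    -- `(i+1)`-st coefficient by `i+1`.
    have hW : d⁄dX R (W ^ (i + 1)) = -((i + 1 : ℕ) * (W ^ (i + 2) * d⁄dX R (V : R⟦X⟧))) := by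
      rw [derivative_pow, derivative_inv]
      push_cast
      ring
    have heuler := coeff_X_mul_derivative (W ^ (i + 1)) (i + 1)
    rw [hW, mul_neg, map_neg, mul_left_comm, ← map_natCast (C (R := R)), coeff_C_mul] at heuler
    rw [if_neg i.succ_ne_zero, ← nsmul_right_inj i.succ_ne_zero, nsmul_zero, nsmul_add,
      nsmul_eq_mul, nsmul_eq_mul]
    push_cast at heuler ⊢
    linear_combination -heuler

theorem coeff_X_mul_pow_mul_inv_pow_mul_derivative (V : R⟦X⟧ˣ) (k n : ℕ) :
    coeff n ((X * (V : R⟦X⟧)) ^ k * (↑V⁻¹ : R⟦X⟧) ^ (n + 1) * d⁄dX R (X * (V : R⟦X⟧))) =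
      coeff n (X ^ k : R⟦X⟧) := by
  rcases lt_or_ge n k with hnk | hkn
  · rw [coeff_X_pow, if_neg hnk.ne, mul_pow, mul_assoc, mul_assoc, coeff_X_pow_mul',
      if_neg (not_le.mpr hnk)]
  · obtain ⟨j, rfl⟩ := Nat.exists_eq_add_of_le hkn
    have hfactor : (X * (V : R⟦X⟧)) ^ k * (↑V⁻¹ : R⟦X⟧) ^ (k + j + 1) *
          d⁄dX R (X * (V : R⟦X⟧)) =
        X ^ k * ((↑V⁻¹ : R⟦X⟧) ^ (j + 1) * d⁄dX R (X * (V : R⟦X⟧))) := by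
      calc _ = X ^ k * ((V : R⟦X⟧) * ↑V⁻¹) ^ k *
            ((↑V⁻¹ : R⟦X⟧) ^ (j + 1) * d⁄dX R (X * (V : R⟦X⟧))) := by ring
        _ = _ := by rw [V.mul_inv, one_pow, mul_one]
    rw [hfactor, add_comm k j, coeff_X_pow_mul, coeff_inv_pow_succ_mul_derivative_X_mul,
      coeff_X_pow]
    simp

/-- Change of variables `x = t·V(t)` in the residue `[xⁿ] f = res f(x) x⁻ⁿ⁻¹ dx`. -/
theorem coeff_eq_coeff_subst_X_mul (V : R⟦X⟧ˣ) (f : R⟦X⟧) (n : ℕ) :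
    coeff n f = coeff n (subst (X * (V : R⟦X⟧)) f * (↑V⁻¹ : R⟦X⟧) ^ (n + 1) *
      d⁄dX R (X * (V : R⟦X⟧))) := by
  have ha : HasSubst (X * (V : R⟦X⟧)) := HasSubst.of_constantCoeff_zero' (by simp)
  simp only [mul_assoc _ ((↑V⁻¹ : R⟦X⟧) ^ (n + 1))]
  have hpoly (p : Polynomial R) : coeff n (p : R⟦X⟧) =
      coeff n (subst (X * (V : R⟦X⟧)) (p : R⟦X⟧) *
        ((↑V⁻¹ : R⟦X⟧) ^ (n + 1) * d⁄dX R (X * (V : R⟦X⟧)))) := by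
    induction p using Polynomial.induction_on' with
    | add p q hp hq => rw [Polynomial.coe_add, subst_add ha, add_mul, map_add, map_add, hp, hq]
    | monomial k a =>
      rw [Polynomial.coe_monomial, monomial_eq_C_mul_X_pow, ← smul_eq_C_mul, subst_smul ha,
        subst_pow ha, subst_X ha, smul_mul_assoc, coeff_smul, coeff_smul, ← mul_assoc,
        coeff_X_mul_pow_mul_inv_pow_mul_derivative]
  have htail (h : R⟦X⟧) : coeff n (subst (X * (V : R⟦X⟧)) (X ^ (n + 1) * h) *
      ((↑V⁻¹ : R⟦X⟧) ^ (n + 1) * d⁄dX R (X * (V : R⟦X⟧)))) = 0 := by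
    rw [subst_mul ha, subst_pow ha, subst_X ha, mul_pow, mul_assoc, mul_assoc,
      coeff_X_pow_mul', if_neg (by omega)]
  calc coeff n f = coeff n (trunc (n + 1) f : R⟦X⟧) :=
        (coeff_coe_trunc_of_lt (lt_add_one n)).symm
    _ = _ := hpoly _
    _ = _ := by
      conv_rhs => rw [eq_X_pow_mul_shift_add_trunc (n + 1) f]
      rw [subst_add ha, add_mul, map_add, htail, zero_add]

/-- The Lagrange–Bürmann formula. -/
theorem mk_coeff_mul_pow_eq_subst (φ : R⟦X⟧ˣ) {u : R⟦X⟧}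
    (hu : u = X * subst u (φ : R⟦X⟧)) (A : R⟦X⟧) :
    mk (fun n ↦ coeff n (A * (φ : R⟦X⟧) ^ n)) =
      subst u A * subst u (↑φ⁻¹ : R⟦X⟧) * d⁄dX R u := by
  have ha : HasSubst u := HasSubst.of_constantCoeff_zero' (by rw [hu]; simp)
  set V : R⟦X⟧ˣ := Units.map ((substAlgHom ha : R⟦X⟧ →ₐ[R] R⟦X⟧) : R⟦X⟧ →* R⟦X⟧) φ
  have hV : (V : R⟦X⟧) = subst u (φ : R⟦X⟧) := by simp [V, coe_substAlgHom]
  have hV' : (↑V⁻¹ : R⟦X⟧) = subst u (↑φ⁻¹ : R⟦X⟧) := by simp [V, coe_substAlgHom]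
  have hXV : X * (V : R⟦X⟧) = u := by rw [hV, ← hu]
  ext n
  rw [coeff_mk, coeff_eq_coeff_subst_X_mul V, hXV, subst_mul ha, subst_pow ha, ← hV, ← hV']
  congr 1
  calc _ = subst u A * ((V : R⟦X⟧) * ↑V⁻¹) ^ n * ↑V⁻¹ * d⁄dX R u := by ring
    _ = _ := by rw [V.mul_inv, one_pow, mul_one]

end PowerSeries

namespace VafaWitten

theorem neg_one_pow_mul_coeff_eq_coeff_mul_pow {R : Type*} [CommRing R] (a b c d : R⟦X⟧ˣ)
    (n : ℕ) (g : ℤ) :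
    (-1) ^ n * coeff n ((a ^ ((n : ℤ) + 1 - 2 * g) * b ^ ((n : ℤ) - g) * c ^ (-((n : ℤ) + g)) *
        d ^ g : R⟦X⟧ˣ) : R⟦X⟧) =
      coeff n (((a * ((a ^ 2 * b * c)⁻¹ * d) ^ g : R⟦X⟧ˣ) : R⟦X⟧) *
        ((-(a * b * c⁻¹) : R⟦X⟧ˣ) : R⟦X⟧) ^ n) := by
  have hsplit : a ^ ((n : ℤ) + 1 - 2 * g) * b ^ ((n : ℤ) - g) * c ^ (-((n : ℤ) + g)) * d ^ g =
      a * ((a ^ 2 * b * c)⁻¹ * d) ^ g * (a * b * c⁻¹) ^ n := by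
    apply Additive.ofMul.injective
    simp only [ofMul_mul, ofMul_zpow, ofMul_inv, ofMul_pow]
    module
  rw [hsplit, Units.val_mul, Units.val_pow_eq_pow_val, Units.val_neg,
    neg_pow ((a * b * c⁻¹ : R⟦X⟧ˣ) : R⟦X⟧), mul_left_comm,
    show (-1 : R⟦X⟧) ^ n = C ((-1 : R) ^ n) by simp, coeff_C_mul]

/-! `u = (1 - X - S) / (2(1 - X))` is the root with `u(0) = 0` of `u = X (2 - u)(1 + u)/(1 - u)`. -/

section Root

variable {S u : ℚ⟦X⟧}

theorem constantCoeff_root (hS0 : constantCoeff S = 1) (hu : 2 * (1 - X) * u = 1 - X - S) :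
    constantCoeff u = 0 := by
  have h := congrArg constantCoeff hu
  simp only [map_mul, map_sub, map_one, constantCoeff_X, map_ofNat, hS0] at h
  linarith

theorem one_sub_X_mul_root_mul_one_sub_root (hS : S ^ 2 = (1 - X) * (1 - 9 * X))
    (hu : 2 * (1 - X) * u = 1 - X - S) : (1 - X) * (u * (1 - u)) = 2 * X := by
  have h4 : (4 * (1 - X) : ℚ⟦X⟧) ≠ 0 := fun h ↦ by
    have h0 := congrArg constantCoeff h
    rw [map_mul, map_ofNat, map_sub, map_one, constantCoeff_X, map_zero] at h0
    norm_num at h0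
  refine mul_left_cancel₀ h4 ?_
  linear_combination ((1 - X) * (1 - 2 * u) + S) * hu - hS

theorem root_mul_one_sub_root (hS : S ^ 2 = (1 - X) * (1 - 9 * X))
    (hu : 2 * (1 - X) * u = 1 - X - S) : u * (1 - u) = X * ((2 - u) * (1 + u)) := by
  linear_combination one_sub_X_mul_root_mul_one_sub_root hS hu

theorem root_eq_X_mul (hS : S ^ 2 = (1 - X) * (1 - 9 * X))
    (hu : 2 * (1 - X) * u = 1 - X - S) (c : ℚ⟦X⟧ˣ) (hc : (c : ℚ⟦X⟧) = 1 - u) :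
    u = X * -((u - 2) * (1 + u) * ((c⁻¹ : ℚ⟦X⟧ˣ) : ℚ⟦X⟧)) := by
  have hc' : ((c⁻¹ : ℚ⟦X⟧ˣ) : ℚ⟦X⟧) * (1 - u) = 1 := by rw [← hc]; exact c.inv_mul
  linear_combination -u * hc' + ((c⁻¹ : ℚ⟦X⟧ˣ) : ℚ⟦X⟧) * root_mul_one_sub_root hS hu

theorem derivative_root_mul (hS : S ^ 2 = (1 - X) * (1 - 9 * X))
    (hu : 2 * (1 - X) * u = 1 - X - S) : d⁄dX ℚ u * S = (2 - u) * (1 + u) := by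
  have h := congrArg (d⁄dX ℚ) (one_sub_X_mul_root_mul_one_sub_root hS hu)
  have h2 : d⁄dX ℚ (2 : ℚ⟦X⟧) = 0 := by rw [← map_ofNat C 2, derivative_C]
  simp only [Derivation.leibniz, map_sub, derivative_one, derivative_X, h2, smul_eq_mul] at h
  linear_combination h + d⁄dX ℚ u * hu

variable {w : ℚ⟦X⟧} (hS0 : constantCoeff S = 1) (hS : S ^ 2 = (1 - X) * (1 - 9 * X))
  (hu : 2 * (1 - X) * u = 1 - X - S) (hw : w * S = S + (1 - 3 * X))
include hS0 hS hu hw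

theorem one_sub_root_mul_derivative_root : (1 - u) * d⁄dX ℚ u * (1 - X) = (1 + u) * w := by
  have hS0' : S ≠ 0 := fun h ↦ by simp [h] at hS0
  refine mul_left_cancel₀ hS0' ?_
  linear_combination (1 - u) * (1 - X) * derivative_root_mul hS hu - (1 + u) * hw
    - (1 + u) * (hu + one_sub_X_mul_root_mul_one_sub_root hS hu)

theorem two_mul_mul_one_sub_two_mul_root :
    2 * w * (1 - 2 * u) = (1 - X) * (u - 2) ^ 2 * ((1 + u) * (1 - u)) := by
  have hS0' : S ≠ 0 := fun h ↦ by simp [h] at hS0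
  refine mul_left_cancel₀ hS0' ?_
  linear_combination 2 * (1 - 2 * u) * hw
    + (2 * (1 - 2 * u) - (1 - X) * (u - 2) ^ 2 * ((1 + u) * (1 - u))) * hu
    - (1 - 2 * u) * (2 * (1 - X) * (1 - u) - (1 - X) * u * (1 - u) - 2)
      * one_sub_X_mul_root_mul_one_sub_root hS hu

end Root

/-- With `a, b, c, d, v` standing for `u - 2, 1 + u, 1 - u, 1 - 2u, 1 - X` and `D` for `u'`. -/
theorem closed_form_of_relations (a b c d v w : ℚ⟦X⟧ˣ) (D : ℚ⟦X⟧) (g : ℕ)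
    (hbase : ↑c * D * ↑v = ↑b * (w : ℚ⟦X⟧))
    (hstep : 2 * ↑w * ↑d = (v : ℚ⟦X⟧) * ↑a ^ 2 * (↑b * ↑c)) :
    ↑(a * ((a ^ 2 * b * c)⁻¹ * d) ^ (g : ℤ)) * ↑(-(a * b * c⁻¹))⁻¹ * D =
      C (-(2 : ℚ) ^ (-(g : ℤ))) * ↑(v ^ ((g : ℤ) - 1) * w ^ (1 - (g : ℤ))) := by
  have hbase' : ((b⁻¹ * c : ℚ⟦X⟧ˣ) : ℚ⟦X⟧) * D = ((v⁻¹ * w : ℚ⟦X⟧ˣ) : ℚ⟦X⟧) := by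
    push_cast
    linear_combination (↑b⁻¹ * ↑v⁻¹ : ℚ⟦X⟧) * hbase - (↑b⁻¹ * ↑c * D : ℚ⟦X⟧) * v.inv_mul
      + (↑v⁻¹ * ↑w : ℚ⟦X⟧) * b.inv_mul
  have hstep' : (((a ^ 2 * b * c)⁻¹ * d : ℚ⟦X⟧ˣ) : ℚ⟦X⟧) =
      C (2⁻¹ : ℚ) * ((v * w⁻¹ : ℚ⟦X⟧ˣ) : ℚ⟦X⟧) := by
    have h2 : C (2⁻¹ : ℚ) * 2 = 1 := by rw [← map_ofNat C 2, ← map_mul]; norm_num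
    set M := a ^ 2 * b * c
    have hM : 2 * ↑w * ↑d = (v : ℚ⟦X⟧) * ↑M := by rw [hstep]; push_cast [M]; ring
    push_cast
    linear_combination -(↑M⁻¹ * ↑d : ℚ⟦X⟧) * h2
      - (↑M⁻¹ * ↑d * C (2⁻¹ : ℚ) * 2 : ℚ⟦X⟧) * w.mul_inv
      + (C (2⁻¹ : ℚ) * ↑w⁻¹ * ↑M⁻¹ : ℚ⟦X⟧) * hM + (C (2⁻¹ : ℚ) * ↑v * ↑w⁻¹ : ℚ⟦X⟧) * M.inv_mul
  have hunits : a * (-(a * b * c⁻¹))⁻¹ = -(b⁻¹ * c) := by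
    rw [inv_neg, mul_neg, neg_inj]
    apply Additive.ofMul.injective
    simp only [ofMul_mul, ofMul_inv]
    abel
  have hvw : v ^ ((g : ℤ) - 1) * w ^ (1 - (g : ℤ)) = v⁻¹ * w * (v * w⁻¹) ^ (g : ℤ) := by
    apply Additive.ofMul.injective
    simp only [ofMul_mul, ofMul_zpow, ofMul_inv]
    module
  have hC : C (-(2 : ℚ) ^ (-(g : ℤ))) = -C (2⁻¹ : ℚ) ^ g := by
    rw [zpow_neg, zpow_natCast, ← inv_pow, map_neg, map_pow]
  calc _ = ↑(a * (-(a * b * c⁻¹))⁻¹) * D * (((a ^ 2 * b * c)⁻¹ * d : ℚ⟦X⟧ˣ) : ℚ⟦X⟧) ^ g := by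
        rw [Units.val_mul, Units.val_mul, zpow_natCast, Units.val_pow_eq_pow_val]
        ring
    _ = _ := by
      rw [hunits, Units.val_neg, neg_mul, hbase', hstep', hC, hvw, zpow_natCast]
      push_cast
      ring

end VafaWitten

theorem vafaWitten_generating_function_signed_general
    (g : ℕ)
    (u₁ u₂ u₃ u₄ : (PowerSeries ℚ)ˣ)
    (hu₁ : (u₁ : PowerSeries ℚ) = X - 2)
    (hu₂ : (u₂ : PowerSeries ℚ) = 1 + X)
    (hu₃ : (u₃ : PowerSeries ℚ) = 1 - X)
    (hu₄ : (u₄ : PowerSeries ℚ) = 1 - 2 * X)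
    (f : ℕ → ℚ)
    (hf : ∀ n : ℕ, f n =
      coeff n
        ((u₁ ^ ((n : ℤ) + 1 - 2 * (g : ℤ)) * u₂ ^ ((n : ℤ) - (g : ℤ)) *
          u₃ ^ (-((n : ℤ) + (g : ℤ))) * u₄ ^ (g : ℤ) : (PowerSeries ℚ)ˣ) : PowerSeries ℚ))
    (S : PowerSeries ℚ)
    (hS0 : constantCoeff S = 1)
    (hSsq : S ^ 2 = (1 - X) * (1 - 9 * X))
    (Su : (PowerSeries ℚ)ˣ) (hSu : (Su : PowerSeries ℚ) = S)
    (v : (PowerSeries ℚ)ˣ) (hv : (v : PowerSeries ℚ) = 1 - X)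
    (w : (PowerSeries ℚ)ˣ)
    (hw : (w : PowerSeries ℚ) =
      1 + (1 - 3 * X) * ((Su⁻¹ : (PowerSeries ℚ)ˣ) : PowerSeries ℚ)) :
    PowerSeries.mk (fun n => (-1 : ℚ) ^ n * f n) =
      C (-(2 : ℚ) ^ (-(g : ℤ))) *
        ((v ^ ((g : ℤ) - 1) * w ^ (1 - (g : ℤ)) : (PowerSeries ℚ)ˣ) : PowerSeries ℚ) := by
  obtain ⟨u, hu⟩ : 2 * (1 - X) ∣ 1 - X - S :=
    IsUnit.dvd (isUnit_iff_constantCoeff.mpr (by simp [map_ofNat]))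
  replace hu := hu.symm
  have hw' : (w : ℚ⟦X⟧) * S = S + (1 - 3 * X) := by
    rw [hw, ← hSu]
    linear_combination (1 - 3 * X) * Su.inv_mul
  have ha : HasSubst u := HasSubst.of_constantCoeff_zero' (VafaWitten.constantCoeff_root hS0 hu)
  set τ := Units.map ((substAlgHom ha : ℚ⟦X⟧ →ₐ[ℚ] ℚ⟦X⟧) : ℚ⟦X⟧ →* ℚ⟦X⟧)
  have hτ (x : ℚ⟦X⟧ˣ) : subst u (x : ℚ⟦X⟧) = ↑(τ x) := by simp [τ, coe_substAlgHom]
  obtain ⟨h₁, h₂, h₃, h₄⟩ : (τ u₁ : ℚ⟦X⟧) = u - 2 ∧ (τ u₂ : ℚ⟦X⟧) = 1 + u ∧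
      (τ u₃ : ℚ⟦X⟧) = 1 - u ∧ (τ u₄ : ℚ⟦X⟧) = 1 - 2 * u := by
    simp only [← hτ, hu₁, hu₂, hu₃, hu₄, ← coe_substAlgHom ha, map_sub, map_add, map_mul,
      map_one, map_ofNat, substAlgHom_X, and_self]
  have hφ : u = X * subst u ((-(u₁ * u₂ * u₃⁻¹) : ℚ⟦X⟧ˣ) : ℚ⟦X⟧) := by
    rw [hτ, Units.map_neg, Units.val_neg, map_mul, map_mul, map_inv]
    push_cast
    rw [h₁, h₂]
    exact VafaWitten.root_eq_X_mul hSsq hu _ h₃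
  simp_rw [hf, VafaWitten.neg_one_pow_mul_coeff_eq_coeff_mul_pow]
  rw [mk_coeff_mul_pow_eq_subst _ hφ, hτ, hτ, map_inv, Units.map_neg]
  simp only [map_mul, map_zpow, map_inv, map_pow]
  refine VafaWitten.closed_form_of_relations _ _ _ _ v w _ g ?_ ?_
  · rw [h₂, h₃, hv]
    exact VafaWitten.one_sub_root_mul_derivative_root hS0 hSsq hu hw'
  · rw [h₁, h₂, h₃, h₄, hv]
    exact VafaWitten.two_mul_mul_one_sub_two_mul_root hS0 hSsq hu hw'

/-- Signed generating function identity for the monopole-branch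
Vafa–Witten contributions.  `f n` is the coefficient of `x^n` in
`(x−2)^{n+1−2g} (1+x)^{n−g} (1−x)^{−(n+g)} (1−2x)^g`, the powers being taken in
the group of units of `ℚ[[x]]`.  If `S ∈ ℚ[[q]]` has constant coefficient `1`
and `S² = (1−q)(1−9q)`, then
`∑ (−1)^n f n q^n = −2^{−g} (1−q)^{g−1} (1 + (1−3q) S⁻¹)^{1−g}`. -/
theorem vafaWitten_generating_function_signed
    (g : ℕ) (hg : 1 ≤ g)
    (u₁ u₂ u₃ u₄ : (PowerSeries ℚ)ˣ)
    (hu₁ : (u₁ : PowerSeries ℚ) = X - 2)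
    (hu₂ : (u₂ : PowerSeries ℚ) = 1 + X)
    (hu₃ : (u₃ : PowerSeries ℚ) = 1 - X)
    (hu₄ : (u₄ : PowerSeries ℚ) = 1 - 2 * X)
    (f : ℕ → ℚ)
    (hf : ∀ n : ℕ, f n =
      coeff n
        ((u₁ ^ ((n : ℤ) + 1 - 2 * (g : ℤ)) * u₂ ^ ((n : ℤ) - (g : ℤ)) *
          u₃ ^ (-((n : ℤ) + (g : ℤ))) * u₄ ^ (g : ℤ) : (PowerSeries ℚ)ˣ) : PowerSeries ℚ))
    (S : PowerSeries ℚ)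
    (hS0 : constantCoeff S = 1)
    (hSsq : S ^ 2 = (1 - X) * (1 - 9 * X))
    (Su : (PowerSeries ℚ)ˣ) (hSu : (Su : PowerSeries ℚ) = S)
    (v : (PowerSeries ℚ)ˣ) (hv : (v : PowerSeries ℚ) = 1 - X)
    (w : (PowerSeries ℚ)ˣ)
    (hw : (w : PowerSeries ℚ) =
      1 + (1 - 3 * X) * ((Su⁻¹ : (PowerSeries ℚ)ˣ) : PowerSeries ℚ))
    (hw0 : constantCoeff (w : PowerSeries ℚ) = 2) :
    PowerSeries.mk (fun n => (-1 : ℚ) ^ n * f n) =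
      C (-(2 : ℚ) ^ (-(g : ℤ))) *
        ((v ^ ((g : ℤ) - 1) * w ^ (1 - (g : ℤ)) : (PowerSeries ℚ)ˣ) : PowerSeries ℚ) :=
  vafaWitten_generating_function_signed_general g u₁ u₂ u₃ u₄ hu₁ hu₂ hu₃ hu₄ f hf S hS0 hSsq Su hSu
    v hv w hw
end

section
/- Let g ≥ 1 be an integer. For each natural number n, let f_n ∈ ℚ be the coefficient of x^n in the formal power series (x−2)^{n+1−2g} · (1+x)^{n−g} · (1−x)^{−(n+g)} · (1−2x)^{g} ∈ ℚ[[x]]. Let σ ∈ ℚ[[q]] be any formal power series with constant coefficient 1 satisfying (1+q)·σ² = 1+9q. Then in ℚ[[q]] one has ∑_{n≥0} f_n · q^n = −2^{−g} · (1+q)^{g−1} · (1 + (1+3q)·((1+q)σ)^{−1})^{1−g}, where 1 + (1+3q)·((1+q)σ)^{−1} has constant coefficient 2, hence is a unit, and its (1−g)-th power is taken in the group of units of ℚ[[q]]. -/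
/-!
Write `A = (x-2)^{1-2g} (1+x)^{-g} (1-x)^{-g} (1-2x)^g` and `φ = (x-2)(1+x)/(1-x)`, so that
`f n = [xⁿ] A φⁿ`. In `k((x))⟦q⟧` the series `F = ∑ A (qφ/x)ⁿ` has constant term `∑ f n qⁿ` in
`x` and satisfies `F · (x(1-x) - q(x-2)(1+x)) = x(1-x)A`. The kernel factors as
`-(1+q)(x-a)(x-b)` with `a = (1-σ)/2` (the solution of `a = qφ(a)`) and `b = 1-a`. After a
partial fraction decomposition, the `b`-part is a power series in `x` without constant term,
while the constant term of `x(1-x)A/(x-a)` is the value of `(1-x)A` at `x = a`. Hence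
`∑ f n qⁿ · (1+q)σ = ((1-x)A)(a)`, and the values of the four factors at `a` are expressed
through `σ` by the quadratic relation.
-/

open PowerSeries

namespace KernelMethod

variable {k : Type*} [CommRing k]

theorem eq_zero_of_forall_eq_mul {ι : Type*} {Δ : ι → k⟦X⟧} {f : ι → ι} {a : k⟦X⟧}
    (ha : constantCoeff a = 0) (h : ∀ i, Δ i = a * Δ (f i)) (i : ι) : Δ i = 0 := by
  have hdvd : ∀ n i, X ^ n ∣ Δ i := by
    intro n
    induction n with
    | zero => simp
    | succ n ih =>
      intro i
      rw [h i, pow_succ']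
      exact mul_dvd_mul (X_dvd_iff.mpr ha) (ih (f i))
  ext n
  exact X_pow_dvd_iff.mp (hdvd (n + 1) i) n n.lt_succ_self

theorem mk_pow_mul_one_sub_C_mul_X (t : k) : (mk fun n => t ^ n) * (1 - C t * X) = 1 := by
  simpa [rescale_mk, rescale_X] using congrArg (rescale t) (mk_one_mul_one_sub_eq_one k)

/-- We read `(LaurentSeries k)⟦X⟧` as `k((x))⟦q⟧`: `X` is `q` and `HahnSeries.single j 1` is `xʲ`.
This is the coefficient of `xⁱ`, as a power series in `q`. -/
noncomputable def xCoeff (i : ℤ) : (LaurentSeries k)⟦X⟧ →+ k⟦X⟧ where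
  toFun u := mk fun n => (coeff n u).coeff i
  map_zero' := by ext; simp
  map_add' u v := by ext; simp

@[simp]
theorem coeff_xCoeff (i : ℤ) (u : (LaurentSeries k)⟦X⟧) (n : ℕ) :
    coeff n (xCoeff i u) = (coeff n u).coeff i := by
  simp [xCoeff]

theorem xCoeff_map_C_mul (i : ℤ) (s : k⟦X⟧) (u : (LaurentSeries k)⟦X⟧) :
    xCoeff i (map HahnSeries.C s * u) = s * xCoeff i u := by
  ext n
  simp [PowerSeries.coeff_mul, HahnSeries.coeff_sum]

theorem xCoeff_one {i : ℤ} (hi : i ≠ 0) : xCoeff i (1 : (LaurentSeries k)⟦X⟧) = 0 := by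
  ext n
  rw [coeff_xCoeff, PowerSeries.coeff_one]
  split_ifs <;> simp [hi]

theorem xCoeff_C_single_mul (i j : ℤ) (u : (LaurentSeries k)⟦X⟧) :
    xCoeff (i + j) (C (HahnSeries.single j 1) * u) = xCoeff i u := by
  ext n
  simp [coeff_C_mul, HahnSeries.coeff_single_mul_add]

theorem xCoeff_zero_map_ofPowerSeries (w : k⟦X⟧⟦X⟧) :
    xCoeff 0 (map (HahnSeries.ofPowerSeries ℤ k) w) = map constantCoeff w := by
  ext n
  simpa using HahnSeries.ofPowerSeries_apply_coeff (coeff n w) 0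

theorem xCoeff_zero_C_ofPowerSeries (p : k⟦X⟧) :
    xCoeff 0 (C (HahnSeries.ofPowerSeries ℤ k p)) = C (constantCoeff p) := by
  rw [← map_C, xCoeff_zero_map_ofPowerSeries, map_C]

theorem map_ofPowerSeries_map_C (s : k⟦X⟧) :
    map (HahnSeries.ofPowerSeries ℤ k) (map C s) = map HahnSeries.C s := by
  rw [← RingHom.comp_apply, ← map_comp]
  congr 2
  exact RingHom.ext (HahnSeries.ofPowerSeries_C (Γ := ℤ))

theorem xCoeff_zero_C_mul_mk_pow (A φ : k⟦X⟧) :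
    xCoeff 0 (C (HahnSeries.ofPowerSeries ℤ k A) *
        mk fun n => (HahnSeries.ofPowerSeries ℤ k φ * HahnSeries.single (-1) 1) ^ n) =
      mk fun n => coeff n (A * φ ^ n) := by
  ext n
  rw [coeff_xCoeff, coeff_C_mul, coeff_mk, mul_pow, HahnSeries.single_pow, one_pow, ← mul_assoc,
    ← map_pow, ← map_mul, coeff_mk, ← HahnSeries.ofPowerSeries_apply_coeff (Γ := ℤ)]
  simpa using HahnSeries.coeff_mul_single_add (r := (1 : k))
    (x := HahnSeries.ofPowerSeries ℤ k (A * φ ^ n)) (a := n) (b := -n)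

theorem C_mul_mk_pow_mul_kernel {A φ D N : k⟦X⟧} (hφ : φ * D = N) :
    C (HahnSeries.ofPowerSeries ℤ k A) *
        (mk fun n => (HahnSeries.ofPowerSeries ℤ k φ * HahnSeries.single (-1) 1) ^ n) *
        map (HahnSeries.ofPowerSeries ℤ k) (C (X * D) - C N * X) =
      C (HahnSeries.ofPowerSeries ℤ k (X * (A * D))) := by
  set Ψ := HahnSeries.ofPowerSeries ℤ k
  set x : LaurentSeries k := HahnSeries.single 1 1
  set y : LaurentSeries k := HahnSeries.single (-1) 1
  have hxy : C x * C y = 1 := by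
    rw [← map_mul, HahnSeries.single_mul_single]
    simp
  have hG := mk_pow_mul_one_sub_C_mul_X (Ψ φ * y)
  rw [map_mul C] at hG
  have hΨX : Ψ X = x := HahnSeries.ofPowerSeries_X
  simp only [map_sub, map_mul, map_C, map_X, hΨX, ← hφ]
  linear_combination C x * C (Ψ A) * C (Ψ D) * hG + C (Ψ A) * C (Ψ D) *
    (mk fun n => (Ψ φ * y) ^ n) * C (Ψ φ) * X * hxy

section Residue

variable {a : k⟦X⟧} {E : (LaurentSeries k)⟦X⟧}

theorem xCoeff_natCast_eq_zero (ha : constantCoeff a = 0)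
    (hE : (C (HahnSeries.single 1 1) - map HahnSeries.C a) * E = 1) (i : ℕ) :
    xCoeff i E = 0 := by
  refine eq_zero_of_forall_eq_mul (Δ := fun i : ℕ => xCoeff i E) (f := Nat.succ) ha
    (fun i => ?_) i
  have hxE : C (HahnSeries.single 1 1) * E = 1 + map HahnSeries.C a * E := by
    linear_combination hE
  have := congrArg (xCoeff ((i : ℤ) + 1)) hxE
  rwa [xCoeff_C_single_mul, map_add, xCoeff_one (by omega), zero_add, xCoeff_map_C_mul] at this

-- `x/(x - a) = 1 + a/(x - a)` and `p = p(0) + x p'`, while `(x - a)⁻¹` has no `x⁰`-term.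
theorem xCoeff_zero_C_X_mul_mul (ha : constantCoeff a = 0)
    (hE : (C (HahnSeries.single 1 1) - map HahnSeries.C a) * E = 1) (p : k⟦X⟧) :
    xCoeff 0 (C (HahnSeries.ofPowerSeries ℤ k (X * p)) * E) = C (constantCoeff p) +
      a * xCoeff 0 (C (HahnSeries.ofPowerSeries ℤ k (X * mk fun n => coeff (n + 1) p)) * E) := by
  set Ψ := HahnSeries.ofPowerSeries ℤ k
  set p' := mk fun n => coeff (n + 1) p
  have hE0 : xCoeff 0 E = 0 := by simpa using xCoeff_natCast_eq_zero ha hE 0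
  have hxE : C (HahnSeries.single 1 1) * E = 1 + map HahnSeries.C a * E := by
    linear_combination hE
  have hp : C (Ψ p) = C (Ψ (X * p')) + map HahnSeries.C (C (constantCoeff p)) := by
    conv_lhs => rw [eq_X_mul_shift_add_const p]
    rw [map_add, map_add, HahnSeries.ofPowerSeries_C, map_C]
  calc xCoeff 0 (C (Ψ (X * p)) * E)
      = xCoeff 0 (C (Ψ p) + map HahnSeries.C a * (C (Ψ (X * p')) * E)
          + map HahnSeries.C a * (map HahnSeries.C (C (constantCoeff p)) * E)) := by
        rw [map_mul Ψ, HahnSeries.ofPowerSeries_X, map_mul C]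
        congr 1
        linear_combination C (Ψ p) * hxE + (map HahnSeries.C a * E) * hp
    _ = _ := by
        rw [map_add, map_add, xCoeff_zero_C_ofPowerSeries, xCoeff_map_C_mul, xCoeff_map_C_mul,
          xCoeff_map_C_mul, hE0, mul_zero, mul_zero, add_zero]

theorem subst_eq_C_add_mul_subst (ha : constantCoeff a = 0) (p : k⟦X⟧) :
    p.subst a = C (constantCoeff p) + a * (mk fun n => coeff (n + 1) p).subst a := by
  have hsubst := HasSubst.of_constantCoeff_zero' ha
  conv_lhs => rw [eq_X_mul_shift_add_const p]
  rw [subst_add hsubst, subst_mul hsubst, subst_X hsubst, subst_C]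
  exact add_comm _ _

theorem xCoeff_zero_C_X_mul_mul_eq_subst (ha : constantCoeff a = 0)
    (hE : (C (HahnSeries.single 1 1) - map HahnSeries.C a) * E = 1) (p : k⟦X⟧) :
    xCoeff 0 (C (HahnSeries.ofPowerSeries ℤ k (X * p)) * E) = p.subst a := by
  refine sub_eq_zero.mp (eq_zero_of_forall_eq_mul
    (Δ := fun p => xCoeff 0 (C (HahnSeries.ofPowerSeries ℤ k (X * p)) * E) - p.subst a)
    (f := fun p => mk fun n => coeff (n + 1) p) ha (fun p => ?_) p)
  rw [xCoeff_zero_C_X_mul_mul ha hE, subst_eq_C_add_mul_subst ha]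
  ring

end Residue

theorem isUnit_C_single_sub_map_C {a : k⟦X⟧} (ha : constantCoeff a = 0) :
    IsUnit (C (HahnSeries.single 1 1) - map HahnSeries.C a : (LaurentSeries k)⟦X⟧) := by
  rw [isUnit_iff_constantCoeff, map_sub, constantCoeff_C, ← coeff_zero_eq_constantCoeff_apply,
    coeff_map, coeff_zero_eq_constantCoeff_apply, ha, map_zero, sub_zero]
  exact IsUnit.of_mul_eq_one (HahnSeries.single (-1) 1) (by simp [HahnSeries.single_mul_single])

theorem isUnit_C_X_sub_map_C {b : k⟦X⟧} (hb : IsUnit (constantCoeff b)) :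
    IsUnit (C X - map C b : k⟦X⟧⟦X⟧) := by
  rw [isUnit_iff_constantCoeff, map_sub, constantCoeff_C, ← coeff_zero_eq_constantCoeff_apply,
    coeff_map, coeff_zero_eq_constantCoeff_apply, isUnit_iff_constantCoeff, map_sub,
    constantCoeff_X, constantCoeff_C, zero_sub, IsUnit.neg_iff]
  exact hb

/-- In `k⟦X⟧⟦X⟧` the outer `X` is `q` and `C X` is `x`: `hker` factors the kernel `x D - q N`. -/
theorem mk_coeff_mul_pow_mul_eq_subst {A φ D N a b c : k⟦X⟧} (hφ : φ * D = N)
    (ha : constantCoeff a = 0) (hb : IsUnit (constantCoeff b))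
    (hker : (C (X * D) - C N * X : k⟦X⟧⟦X⟧) = map C c * ((C X - map C a) * (C X - map C b))) :
    (mk fun n => coeff n (A * φ ^ n)) * (c * (a - b)) = (A * D).subst a := by
  set Ψ := HahnSeries.ofPowerSeries ℤ k
  set G := mk fun n => (Ψ φ * HahnSeries.single (-1) 1) ^ n
  set x : LaurentSeries k := HahnSeries.single 1 1
  obtain ⟨Ea, hEa⟩ := (isUnit_C_single_sub_map_C ha).exists_right_inv
  obtain ⟨β, hβ⟩ := (isUnit_C_X_sub_map_C hb).exists_right_inv
  have hΨX : Ψ X = x := HahnSeries.ofPowerSeries_X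
  -- `(x - b)⁻¹` has coefficients in `k⟦x⟧`, so the `b`-part below has no `x⁰`-term.
  have hEb : (C x - map HahnSeries.C b) * map Ψ β = 1 := by
    rw [← map_ofPowerSeries_map_C, ← hΨX, ← map_C, ← map_sub, ← map_mul, hβ, map_one]
  have hkernel : C (Ψ A) * G * map HahnSeries.C c * ((C x - map HahnSeries.C a) *
      (C x - map HahnSeries.C b)) = C (Ψ (X * (A * D))) := by
    rw [← C_mul_mk_pow_mul_kernel hφ, hker]
    simp only [map_mul, map_sub, map_C, map_ofPowerSeries_map_C, HahnSeries.ofPowerSeries_X,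
      mul_assoc]
    rfl
  have hpartial : C (Ψ A) * G * map HahnSeries.C (c * (a - b)) =
      C (Ψ (X * (A * D))) * Ea - map Ψ (C (X * (A * D)) * β) := by
    rw [map_mul, map_sub, map_mul (map Ψ), map_C]
    linear_combination (Ea - map Ψ β) * hkernel
      - C (Ψ A) * G * map HahnSeries.C c * (C x - map HahnSeries.C b) * hEa
      + C (Ψ A) * G * map HahnSeries.C c * (C x - map HahnSeries.C a) * hEb
  calc (mk fun n => coeff n (A * φ ^ n)) * (c * (a - b))
      = xCoeff 0 (C (Ψ A) * G * map HahnSeries.C (c * (a - b))) := by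
        rw [mul_comm (C (Ψ A) * G), xCoeff_map_C_mul, xCoeff_zero_C_mul_mk_pow, mul_comm]
    _ = (A * D).subst a := by
        rw [hpartial, map_sub, xCoeff_zero_C_X_mul_mul_eq_subst ha hEa,
          xCoeff_zero_map_ofPowerSeries]
        simp

end KernelMethod

namespace VafaWitten

open KernelMethod

section CommRing

variable {k : Type*} [CommRing k]

theorem kernel_factorization {a : k⟦X⟧} (ha : a * (1 - a) = X * ((a - 2) * (1 + a))) :
    (C (X * (1 - X)) - C ((X - 2) * (1 + X)) * X : k⟦X⟧⟦X⟧) =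
      map C (-(1 + X)) * ((C X - map C a) * (C X - map C (1 - a))) := by
  have ha' := congrArg (map (C : k →+* k⟦X⟧)) ha
  simp only [map_mul, map_sub, map_add, map_one, map_neg, map_X, map_ofNat] at ha' ⊢
  linear_combination ha'

theorem mk_coeff_mul_pow_mul_eq_subst_of_quadratic {A φ a : k⟦X⟧}
    (hφ : φ * (1 - X) = (X - 2) * (1 + X)) (ha0 : constantCoeff a = 0)
    (ha : a * (1 - a) = X * ((a - 2) * (1 + a))) :
    (mk fun n => coeff n (A * φ ^ n)) * ((1 + X) * (1 - 2 * a)) = (A * (1 - X)).subst a := by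
  rw [← mk_coeff_mul_pow_mul_eq_subst hφ ha0 (by simp [ha0]) (kernel_factorization ha)]
  ring

theorem zpow_split_zpow {G : Type*} [CommGroup G] (x y z t : G) (m n : ℤ) :
    x ^ (n + 1 - 2 * m) * y ^ (n - m) * z ^ (-(n + m)) * t ^ m =
      x ^ (1 - 2 * m) * y ^ (-m) * z ^ (1 - m) * t ^ m * z⁻¹ * (x * y * z⁻¹) ^ n := by
  apply Additive.ofMul.injective
  simp only [ofMul_mul, ofMul_zpow, ofMul_inv]
  module

theorem mk_coeff_zpow_mul_eq_subst {u₁ u₂ u₃ : k⟦X⟧ˣ} (u₄ : k⟦X⟧ˣ) (hu₁ : (u₁ : k⟦X⟧) = X - 2)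
    (hu₂ : (u₂ : k⟦X⟧) = 1 + X) (hu₃ : (u₃ : k⟦X⟧) = 1 - X) (m : ℤ) {a : k⟦X⟧}
    (ha0 : constantCoeff a = 0) (ha : a * (1 - a) = X * ((a - 2) * (1 + a))) :
    (mk fun n : ℕ => coeff n
        ((u₁ ^ ((n : ℤ) + 1 - 2 * m) * u₂ ^ ((n : ℤ) - m) * u₃ ^ (-((n : ℤ) + m)) * u₄ ^ m :
          k⟦X⟧ˣ) : k⟦X⟧)) * ((1 + X) * (1 - 2 * a)) =
      (((u₁ ^ (1 - 2 * m) * u₂ ^ (-m) * u₃ ^ (1 - m) * u₄ ^ m : k⟦X⟧ˣ) : k⟦X⟧)).subst a := by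
  have hφ : (↑(u₁ * u₂ * u₃⁻¹) : k⟦X⟧) * (1 - X) = (X - 2) * (1 + X) := by
    rw [← hu₁, ← hu₂, ← hu₃, ← Units.val_mul, inv_mul_cancel_right, Units.val_mul]
  simp_rw [zpow_split_zpow, zpow_natCast, Units.val_mul _ (_ ^ _), Units.val_pow_eq_pow_val]
  rw [mk_coeff_mul_pow_mul_eq_subst_of_quadratic hφ ha0 ha, ← hu₃, ← Units.val_mul,
    inv_mul_cancel_right]

end CommRing

theorem exists_lagrange_root {k : Type*} [Field k] (h2 : (2 : k) ≠ 0) {σ : k⟦X⟧}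
    (hσ0 : constantCoeff σ = 1) (hσsq : (1 + X) * σ ^ 2 = 1 + 9 * X) :
    ∃ a : k⟦X⟧, constantCoeff a = 0 ∧ 1 - 2 * a = σ ∧ a * (1 - a) = X * ((a - 2) * (1 + a)) := by
  have hhalf : 2 * C 2⁻¹ = (1 : k⟦X⟧) := by
    rw [← map_ofNat C 2, ← map_mul, mul_inv_cancel₀ h2, map_one]
  have h4 : (4 : k⟦X⟧) ≠ 0 := by
    rw [← map_ofNat C 4, Ne, ← map_zero C, C_injective.eq_iff]
    exact fun h => h2 (mul_self_eq_zero.mp (by linear_combination h))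
  have h2a : 1 - 2 * (C 2⁻¹ * (1 - σ)) = σ := by linear_combination (σ - 1) * hhalf
  refine ⟨C 2⁻¹ * (1 - σ), by simp [hσ0], h2a, mul_left_cancel₀ h4 ?_⟩
  rw [← h2a] at hσsq
  linear_combination -hσsq

theorem inv_mul_zpow_eq {G : Type*} [CommGroup G] {A B Cc D v w P ν τ : G} (m : ℤ)
    (h₁ : A * B * v = ν * τ) (h₂ : A * Cc = ν * (w * D)) (h₃ : v * D = P) (hν : ν * ν = 1) :
    P⁻¹ * (A ^ (1 - 2 * m) * B ^ (-m) * Cc ^ (1 - m) * D ^ m) =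
      ν * τ ^ (-m) * (v ^ (m - 1) * w ^ (1 - m)) := by
  rw [← h₃, eq_mul_inv_of_mul_eq (a := B) (c := A * v) (b := ν * τ) (by rw [← h₁]; ac_rfl),
    eq_mul_inv_of_mul_eq (a := Cc) (c := A) (b := ν * (w * D)) (by rw [mul_comm, h₂])]
  calc _ = ν * (ν * ν) ^ (-m) * τ ^ (-m) * (v ^ (m - 1) * w ^ (1 - m)) := by
        apply Additive.ofMul.injective
        simp only [ofMul_mul, ofMul_zpow, ofMul_inv]
        module
    _ = _ := by rw [hν, one_zpow, mul_one]

theorem inv_mul_zpow_eq_of_root {R : Type*} [CommRing R] {a q : R} {A B Cc D P v w τ : Rˣ}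
    (m : ℤ) (ha : a * (1 - a) = q * ((a - 2) * (1 + a))) (hA : (A : R) = a - 2)
    (hB : (B : R) = 1 + a) (hC : (Cc : R) = 1 - a) (hD : (D : R) = 1 - 2 * a)
    (hP : (P : R) = (1 + q) * (1 - 2 * a)) (hv : (v : R) = 1 + q)
    (hw : (w : R) = 1 + (1 + 3 * q) * ↑P⁻¹) (hτ : (τ : R) = 2) :
    P⁻¹ * (A ^ (1 - 2 * m) * B ^ (-m) * Cc ^ (1 - m) * D ^ m) =
      -τ ^ (-m) * (v ^ (m - 1) * w ^ (1 - m)) := by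
  have hwP : (w : R) * P = P + (1 + 3 * q) := by
    rw [hw]
    linear_combination (1 + 3 * q) * Units.inv_mul P
  refine (inv_mul_zpow_eq m (ν := -1) (Units.ext ?_) (mul_left_cancel (a := v) (Units.ext ?_))
    (Units.ext ?_) (by simp)).trans (by rw [neg_one_mul])
  · simp only [Units.val_mul, Units.val_neg, Units.val_one, hA, hB, hv, hτ]
    linear_combination -ha
  · simp only [Units.val_mul, Units.val_neg, Units.val_one, hA, hC, hD, hv]
    rw [hP] at hwP
    linear_combination hwP + ha
  · simp only [Units.val_mul, hv, hD, hP]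

end VafaWitten

open VafaWitten in
theorem vafaWitten_generating_function_unsigned_general
    (g : ℕ)
    (u₁ u₂ u₃ u₄ : (PowerSeries ℚ)ˣ)
    (hu₁ : (u₁ : PowerSeries ℚ) = X - 2)
    (hu₂ : (u₂ : PowerSeries ℚ) = 1 + X)
    (hu₃ : (u₃ : PowerSeries ℚ) = 1 - X)
    (hu₄ : (u₄ : PowerSeries ℚ) = 1 - 2 * X)
    (f : ℕ → ℚ)
    (hf : ∀ n : ℕ, f n =
      coeff n
        ((u₁ ^ ((n : ℤ) + 1 - 2 * (g : ℤ)) * u₂ ^ ((n : ℤ) - (g : ℤ)) *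
          u₃ ^ (-((n : ℤ) + (g : ℤ))) * u₄ ^ (g : ℤ) : (PowerSeries ℚ)ˣ) : PowerSeries ℚ))
    (σ : PowerSeries ℚ)
    (hσ0 : constantCoeff σ = 1)
    (hσsq : (1 + X) * σ ^ 2 = 1 + 9 * X)
    (P : (PowerSeries ℚ)ˣ) (hP : (P : PowerSeries ℚ) = (1 + X) * σ)
    (v : (PowerSeries ℚ)ˣ) (hv : (v : PowerSeries ℚ) = 1 + X)
    (w : (PowerSeries ℚ)ˣ)
    (hw : (w : PowerSeries ℚ) =
      1 + (1 + 3 * X) * ((P⁻¹ : (PowerSeries ℚ)ˣ) : PowerSeries ℚ)) :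
    PowerSeries.mk (fun n => f n) =
      C (-(2 : ℚ) ^ (-(g : ℤ))) *
        ((v ^ ((g : ℤ) - 1) * w ^ (1 - (g : ℤ)) : (PowerSeries ℚ)ˣ) : PowerSeries ℚ) := by
  obtain ⟨a, ha0, h2a, ha⟩ := exists_lagrange_root two_ne_zero hσ0 hσsq
  rw [← h2a] at hP
  set e : ℚ⟦X⟧ →ₐ[ℚ] ℚ⟦X⟧ := substAlgHom (HasSubst.of_constantCoeff_zero' ha0)
  have heX : e X = a := substAlgHom_X _
  set V := Units.map (e : ℚ⟦X⟧ →* ℚ⟦X⟧)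
  have hV : ∀ u : ℚ⟦X⟧ˣ, (V u : ℚ⟦X⟧) = e u := fun _ => rfl
  have hmk : PowerSeries.mk (fun n => f n) =
      ↑(P⁻¹ * V (u₁ ^ (1 - 2 * (g : ℤ)) * u₂ ^ (-(g : ℤ)) * u₃ ^ (1 - (g : ℤ)) *
        u₄ ^ (g : ℤ))) := by
    rw [Units.val_mul, Units.coe_map, MonoidHom.coe_coe, coe_substAlgHom,
      ← mk_coeff_zpow_mul_eq_subst u₄ hu₁ hu₂ hu₃ g ha0 ha, ← hP, ← funext hf, mul_comm,
      Units.mul_inv_cancel_right]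
  set τ := Units.map ((C : ℚ →+* ℚ⟦X⟧) : ℚ →* ℚ⟦X⟧) (Units.mk0 (2 : ℚ) two_ne_zero) with hτ
  have hτg : ((τ ^ (-(g : ℤ)) : ℚ⟦X⟧ˣ) : ℚ⟦X⟧) = C (2 ^ (-(g : ℤ))) := by
    rw [hτ, ← map_zpow, Units.coe_map, MonoidHom.coe_coe, Units.val_zpow_eq_zpow_val, Units.val_mk0]
  rw [hmk, map_mul, map_mul, map_mul, map_zpow, map_zpow, map_zpow, map_zpow,
    inv_mul_zpow_eq_of_root (τ := τ) g ha (by rw [hV, hu₁, map_sub, heX, map_ofNat])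
      (by rw [hV, hu₂, map_add, heX, map_one]) (by rw [hV, hu₃, map_sub, heX, map_one])
      (by rw [hV, hu₄, map_sub, map_mul, heX, map_one, map_ofNat]) hP hv hw (map_ofNat C 2),
    Units.val_mul, Units.val_neg, hτg, map_neg]

/-- Unsigned generating function identity.  `f n` is the coefficient
of `x^n` in `(x−2)^{n+1−2g} (1+x)^{n−g} (1−x)^{−(n+g)} (1−2x)^g`.  If `σ ∈ ℚ[[q]]`
has constant coefficient `1` and `(1+q)σ² = 1+9q`, then
`∑ f n q^n = −2^{−g} (1+q)^{g−1} (1 + (1+3q)((1+q)σ)⁻¹)^{1−g}`. -/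
theorem vafaWitten_generating_function_unsigned
    (g : ℕ) (hg : 1 ≤ g)
    (u₁ u₂ u₃ u₄ : (PowerSeries ℚ)ˣ)
    (hu₁ : (u₁ : PowerSeries ℚ) = X - 2)
    (hu₂ : (u₂ : PowerSeries ℚ) = 1 + X)
    (hu₃ : (u₃ : PowerSeries ℚ) = 1 - X)
    (hu₄ : (u₄ : PowerSeries ℚ) = 1 - 2 * X)
    (f : ℕ → ℚ)
    (hf : ∀ n : ℕ, f n =
      coeff n
        ((u₁ ^ ((n : ℤ) + 1 - 2 * (g : ℤ)) * u₂ ^ ((n : ℤ) - (g : ℤ)) *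
          u₃ ^ (-((n : ℤ) + (g : ℤ))) * u₄ ^ (g : ℤ) : (PowerSeries ℚ)ˣ) : PowerSeries ℚ))
    (σ : PowerSeries ℚ)
    (hσ0 : constantCoeff σ = 1)
    (hσsq : (1 + X) * σ ^ 2 = 1 + 9 * X)
    (P : (PowerSeries ℚ)ˣ) (hP : (P : PowerSeries ℚ) = (1 + X) * σ)
    (v : (PowerSeries ℚ)ˣ) (hv : (v : PowerSeries ℚ) = 1 + X)
    (w : (PowerSeries ℚ)ˣ)
    (hw : (w : PowerSeries ℚ) =
      1 + (1 + 3 * X) * ((P⁻¹ : (PowerSeries ℚ)ˣ) : PowerSeries ℚ))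
    (hw0 : constantCoeff (w : PowerSeries ℚ) = 2) :
    PowerSeries.mk (fun n => f n) =
      C (-(2 : ℚ) ^ (-(g : ℤ))) *
        ((v ^ ((g : ℤ) - 1) * w ^ (1 - (g : ℤ)) : (PowerSeries ℚ)ˣ) : PowerSeries ℚ) :=
  vafaWitten_generating_function_unsigned_general g u₁ u₂ u₃ u₄ hu₁ hu₂ hu₃ hu₄ f hf σ hσ0 hσsq P hP
    v hv w hw
end

section
/- Let g ≥ 1 be an integer. Let σ ∈ ℚ[[q]] be any formal power series with constant coefficient 1 satisfying (1+q)·σ² = 1+9q, and set x₀ := (1−σ)/2 and x₁ := (1+σ)/2 in ℚ[[q]]. Then in ℚ[[q]] one has (1−2x₀)^{g} · (x₀−2)^{1−2g} · (1+x₀)^{−g} · (1−x₀)^{1−g} · (−1) · ((1+q)·(x₀−x₁))^{−1} = −2^{−g} · (1+q)^{g−1} · (1 + (1+3q)·((1+q)σ)^{−1})^{1−g}, where 1−2x₀, x₀−2, 1+x₀, 1−x₀, (1+q)(x₀−x₁), (1+q)σ and 1 + (1+3q)·((1+q)σ)^{−1} are units of ℚ[[q]] (constant coefficients 1, −2, 1,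 1, −1, 1, 2 respectively) and integer powers of units are taken in the group of units. -/
open PowerSeries

/-! With `σ = 1 - 2x₀`, the series `x₀` is a root of `(1+q)x² - (1+q)x - 2q`, and
`x₁ = 1 - x₀`. The root equation yields three multiplicative relations among the units
involved: `(1+q)(x₀ - x₁) = -(1+q)σ`, `(x₀ - 2)(1 - x₀) = -wσ` and
`2σw = (1+q)(x₀ - 2)²(1 + x₀)(1 - x₀)`. Passing to the additive group, the claimed identity
of integer powers is a `ℤ`-linear combination of these three relations. -/

section ResidueAlgebra

variable {R : Type*} [CommRing R] {y s x₀ w : R}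

theorem two_mul_eq_of_eq_inv_two_smul [Algebra ℚ R] {x z : R} (h : x = (2 : ℚ)⁻¹ • z) :
    2 * x = z := by
  rw [h, two_mul, ← two_smul ℚ, smul_inv_smul₀ two_ne_zero]

theorem quadratic_eq_zero_of_two_mul_eq (h2 : IsUnit (2 : R))
    (hs : (1 + y) * s ^ 2 = 1 + 9 * y) (hx : 2 * x₀ = 1 - s) :
    (1 + y) * x₀ ^ 2 - (1 + y) * x₀ - 2 * y = 0 := by
  apply (h2.mul h2).mul_left_cancel
  linear_combination (1 + y) * (2 * x₀ - 1 - s) * hx + hs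

theorem one_add_mul_sub_two_mul_one_add_eq_neg_two
    (hx : (1 + y) * x₀ ^ 2 - (1 + y) * x₀ - 2 * y = 0) :
    (1 + y) * ((x₀ - 2) * (1 + x₀)) = -2 := by
  linear_combination hx

theorem sub_two_mul_one_sub_eq_neg_mul (hy : IsUnit (1 + y))
    (hx : (1 + y) * x₀ ^ 2 - (1 + y) * x₀ - 2 * y = 0)
    (hw : w * ((1 + y) * (1 - 2 * x₀)) = (1 + y) * (1 - 2 * x₀) + (1 + 3 * y)) :
    (x₀ - 2) * (1 - x₀) = -(w * (1 - 2 * x₀)) := by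
  apply hy.mul_left_cancel
  linear_combination -hx + hw

theorem mul_eq_add_of_eq_one_add_mul_inv {t : R} (P : Rˣ) (hw : w = 1 + t * ↑P⁻¹) :
    w * P = P + t := by
  rw [hw, add_mul, one_mul, mul_assoc, Units.inv_mul, mul_one]

end ResidueAlgebra

theorem zpow_mul_zpow_eq_of_relations {G : Type*} [CommGroup G] (a b c d e u v w n : G) (g : ℤ)
    (he : e = n * (v * a)) (hbd : b * d = n * (w * a))
    (hu : u * (a * w) = v * (b ^ 2 * (c * d))) :
    a ^ g * b ^ (1 - 2 * g) * c ^ (-g) * d ^ (1 - g) * n * e⁻¹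
      = n * u ^ (-g) * (v ^ (g - 1) * w ^ (1 - g)) := by
  apply Additive.ofMul.injective
  have he' := congrArg Additive.ofMul he
  have hbd' := congrArg Additive.ofMul hbd
  have hu' := congrArg Additive.ofMul hu
  simp only [ofMul_mul, ofMul_pow, ofMul_zpow, ofMul_inv] at he' hbd' hu' ⊢
  linear_combination (norm := module) -he' + hbd' + g • hu'

theorem Units.val_map_zpow {K S : Type*} [DivisionRing K] [Semiring S] (f : K →+* S) (r : Kˣ)
    (k : ℤ) : ((Units.map f.toMonoidHom r ^ k : Sˣ) : S) = f ((r : K) ^ k) := by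
  rw [← map_zpow, Units.coe_map, Units.val_zpow_eq_zpow_val]
  rfl

theorem vafaWitten_residue_simplification_general
    (g : ℕ)
    (σ : PowerSeries ℚ)
    (hσsq : (1 + X) * σ ^ 2 = 1 + 9 * X)
    (x₀ x₁ : PowerSeries ℚ)
    (hx₀ : x₀ = (2 : ℚ)⁻¹ • (1 - σ))
    (hx₁ : x₁ = (2 : ℚ)⁻¹ • (1 + σ))
    (a b c d e : (PowerSeries ℚ)ˣ)
    (ha : (a : PowerSeries ℚ) = 1 - 2 * x₀)
    (hb : (b : PowerSeries ℚ) = x₀ - 2)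
    (hc : (c : PowerSeries ℚ) = 1 + x₀)
    (hd : (d : PowerSeries ℚ) = 1 - x₀)
    (he : (e : PowerSeries ℚ) = (1 + X) * (x₀ - x₁))
    (P : (PowerSeries ℚ)ˣ) (hP : (P : PowerSeries ℚ) = (1 + X) * σ)
    (v : (PowerSeries ℚ)ˣ) (hv : (v : PowerSeries ℚ) = 1 + X)
    (w : (PowerSeries ℚ)ˣ)
    (hw : (w : PowerSeries ℚ) =
      1 + (1 + 3 * X) * ((P⁻¹ : (PowerSeries ℚ)ˣ) : PowerSeries ℚ)) :
    ((a ^ (g : ℤ) * b ^ (1 - 2 * (g : ℤ)) * c ^ (-(g : ℤ)) * d ^ (1 - (g : ℤ)) :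
        (PowerSeries ℚ)ˣ) : PowerSeries ℚ) *
      (-1) * ((e⁻¹ : (PowerSeries ℚ)ˣ) : PowerSeries ℚ) =
    C (-(2 : ℚ) ^ (-(g : ℤ))) *
      ((v ^ ((g : ℤ) - 1) * w ^ (1 - (g : ℤ)) : (PowerSeries ℚ)ˣ) : PowerSeries ℚ) := by
  set u : (PowerSeries ℚ)ˣ := Units.map (C : ℚ →+* PowerSeries ℚ).toMonoidHom
    (Units.mk0 2 two_ne_zero)
  have hu : (u : PowerSeries ℚ) = 2 := map_ofNat C 2
  have h2 : IsUnit (2 : PowerSeries ℚ) := hu ▸ u.isUnit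
  have hx₀' := two_mul_eq_of_eq_inv_two_smul hx₀
  have hx₁' := two_mul_eq_of_eq_inv_two_smul hx₁
  have hroot := quadratic_eq_zero_of_two_mul_eq h2 hσsq hx₀'
  have hwP := mul_eq_add_of_eq_one_add_mul_inv P hw
  rw [hP, ← sub_sub_cancel 1 σ, ← hx₀'] at hwP
  have hbd := sub_two_mul_one_sub_eq_neg_mul (hv ▸ v.isUnit) hroot hwP
  have hE : e = -1 * (v * a) := by
    refine Units.ext (h2.mul_left_cancel ?_)
    simp only [Units.val_mul, Units.val_neg, Units.val_one, he, hv, ha]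
    linear_combination -(1 + X) * (hx₀' + hx₁')
  have hBD : b * d = -1 * (w * a) := by
    refine Units.ext ?_
    simp only [Units.val_mul, Units.val_neg, Units.val_one, hb, hd, ha]
    linear_combination hbd
  have hU : u * (a * w) = v * (b ^ 2 * (c * d)) := by
    refine Units.ext ?_
    simp only [Units.val_mul, Units.val_pow_eq_pow_val, hu, hv, ha, hb, hc, hd]
    linear_combination -(x₀ - 2) * (1 - x₀) * one_add_mul_sub_two_mul_one_add_eq_neg_two hroot
      + 2 * hbd
  have key := congrArg Units.val (zpow_mul_zpow_eq_of_relations a b c d e u v w (-1) g hE hBD hU)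
  simp only [Units.val_mul, Units.val_neg, Units.val_one] at key ⊢
  rw [Units.val_map_zpow, Units.val_mk0] at key
  rw [map_neg]
  linear_combination key

/-- Algebraic simplification of the residue.  With `σ ∈ ℚ[[q]]` of
constant term `1` satisfying `(1+q)σ² = 1+9q`, `x₀ = (1−σ)/2`, `x₁ = (1+σ)/2`:
`(1−2x₀)^g (x₀−2)^{1−2g} (1+x₀)^{−g} (1−x₀)^{1−g} · (−1) · ((1+q)(x₀−x₁))^{−1}
  = −2^{−g} (1+q)^{g−1} (1 + (1+3q)((1+q)σ)^{−1})^{1−g}`. -/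
theorem vafaWitten_residue_simplification
    (g : ℕ) (hg : 1 ≤ g)
    (σ : PowerSeries ℚ)
    (hσ0 : constantCoeff σ = 1)
    (hσsq : (1 + X) * σ ^ 2 = 1 + 9 * X)
    (x₀ x₁ : PowerSeries ℚ)
    (hx₀ : x₀ = (2 : ℚ)⁻¹ • (1 - σ))
    (hx₁ : x₁ = (2 : ℚ)⁻¹ • (1 + σ))
    (a b c d e : (PowerSeries ℚ)ˣ)
    (ha : (a : PowerSeries ℚ) = 1 - 2 * x₀)
    (hb : (b : PowerSeries ℚ) = x₀ - 2)
    (hc : (c : PowerSeries ℚ) = 1 + x₀)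
    (hd : (d : PowerSeries ℚ) = 1 - x₀)
    (he : (e : PowerSeries ℚ) = (1 + X) * (x₀ - x₁))
    (P : (PowerSeries ℚ)ˣ) (hP : (P : PowerSeries ℚ) = (1 + X) * σ)
    (v : (PowerSeries ℚ)ˣ) (hv : (v : PowerSeries ℚ) = 1 + X)
    (w : (PowerSeries ℚ)ˣ)
    (hw : (w : PowerSeries ℚ) =
      1 + (1 + 3 * X) * ((P⁻¹ : (PowerSeries ℚ)ˣ) : PowerSeries ℚ))
    (hw0 : constantCoeff (w : PowerSeries ℚ) = 2) :
    ((a ^ (g : ℤ) * b ^ (1 - 2 * (g : ℤ)) * c ^ (-(g : ℤ)) * d ^ (1 - (g : ℤ)) :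
        (PowerSeries ℚ)ˣ) : PowerSeries ℚ) *
      (-1) * ((e⁻¹ : (PowerSeries ℚ)ˣ) : PowerSeries ℚ) =
    C (-(2 : ℚ) ^ (-(g : ℤ))) *
      ((v ^ ((g : ℤ) - 1) * w ^ (1 - (g : ℤ)) : (PowerSeries ℚ)ˣ) : PowerSeries ℚ) :=
  vafaWitten_residue_simplification_general g σ hσsq x₀ x₁ hx₀ hx₁ a b c d e ha hb hc hd he P hP v
    hv w hw
end
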